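/- The quotient A/≡ of a Wheeler DFA by the equivalence ≡ (maximal runs of Wheeler-consecutive states with equal incoming labels and Myhill-Nerode equivalent) is itself a Wheeler DFA: the order induced on ≡-classes by the Wheeler order of A (classes being intervals) satisfies the three Wheeler axioms. -/

import Mathlib

/-- A Wheeler DFA over a linearly ordered state set `Q` (the Wheeler order)
and a linearly ordered alphabet `A`.  The transition function is partial
(`Option`-valued).  The three Wheeler axioms are part of the structure. -/
structure WDFA (Q A : Type) [LinearOrder Q] [LinearOrder A] where
  delta : Q → A → Option Q
  start : Q
  F : Set Q
  /-- Wheeler axiom (i): the initial state is minimum. -/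
  start_le : ∀ u, start ≤ u
  /-- Wheeler axiom (ii). -/
  w2 : ∀ {u v : Q} {a b : A} {u' v' : Q},
      delta u a = some u' → delta v b = some v' → a < b → u' < v'
  /-- Wheeler axiom (iii). -/
  w3 : ∀ {u v : Q} {a : A} {u' v' : Q},
      delta u a = some u' → delta v a = some v' → u < v → u' ≤ v'

namespace WDFA

variable {Q A : Type} [LinearOrder Q] [LinearOrder A]

/-- Extension of the (partial) transition function to strings. -/
def dhat (M : WDFA Q A) : Q → List A → Option Q
  | q, [] => some q
  | q, a :: w => (M.delta q a).bind (fun p => M.dhat p w)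

/-- `q` accepts the string `w`. -/
def Acc (M : WDFA Q A) (q : Q) (w : List A) : Prop :=
  ∃ p, M.dhat q w = some p ∧ p ∈ M.F

/-- Set of labels of outgoing edges of `q`. -/
def out (M : WDFA Q A) (q : Q) : Set A := {a | (M.delta q a).isSome}

/-- Myhill–Nerode state equivalence (with equal domains of definition). -/
def MN (M : WDFA Q A) (u v : Q) : Prop :=
  ∀ w : List A, (M.dhat u w).isSome = (M.dhat v w).isSome ∧ (M.Acc u w ↔ M.Acc v w)

/-- Myhill–Nerode state equivalence, acceptance-only version
(undefined counts as rejecting). -/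
def MNacc (M : WDFA Q A) (u v : Q) : Prop :=
  ∀ w : List A, M.Acc u w ↔ M.Acc v w

/-- `u` and `v` are adjacent in the Wheeler order. -/
def Adj (M : WDFA Q A) (u v : Q) : Prop :=
  u < v ∧ ∀ w : Q, ¬ (u < w ∧ w < v)

/-- `lam` is the incoming-label map: `lam start = ⊥` (the special symbol `#`)
and every transition entering `v` is labelled `lam v`. -/
def HasLam (M : WDFA Q A) (lam : Q → WithBot A) : Prop :=
  lam M.start = ⊥ ∧ ∀ u a v, M.delta u a = some v → lam v = (a : WithBot A)

/-- Every non-initial state has an incoming transition (reachability). -/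
def Reach1 (M : WDFA Q A) : Prop :=
  ∀ u, u ≠ M.start → ∃ p a, M.delta p a = some u

/-- Every state accepts some string (is final or reaches a final state). -/
def Coacc (M : WDFA Q A) : Prop := ∀ u, ∃ w, M.Acc u w

/-- The minimum-WDFA equivalence `≡`: `u` and `v` have the same incoming
label, are Myhill–Nerode equivalent, and so is every state between them in
the Wheeler order. -/
def Equ (M : WDFA Q A) (lam : Q → WithBot A) (u v : Q) : Prop :=
  lam u = lam v ∧ M.MN u v ∧
    ∀ w, min u v ≤ w → w ≤ max u v → lam w = lam u ∧ M.MN w u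

/-- `(u,v)` is a node of the border graph: adjacent states with equal
incoming labels. -/
def IsBorder (M : WDFA Q A) (lam : Q → WithBot A) (u v : Q) : Prop :=
  M.Adj u v ∧ lam u = lam v

/-- Edge relation of the border graph `B(A)`: there is an edge from the
border `x` to the border `y` whenever `x.1 = δ(y.1, λ(x.1))` and
`x.2 = δ(y.2, λ(x.1))`. -/
def EdgeZ (M : WDFA Q A) (lam : Q → WithBot A) : Q × Q → Q × Q → Prop :=
  fun x y => M.IsBorder lam x.1 x.2 ∧ M.IsBorder lam y.1 y.2 ∧
    ∃ a : A, lam x.1 = (a : WithBot A) ∧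
      M.delta y.1 a = some x.1 ∧ M.delta y.2 a = some x.2

/-- Transition function of the quotient automaton `A/st`
(`δ([u],a) = [δ(u,a)]`, implemented via representatives). -/
noncomputable def qdelta (M : WDFA Q A) (st : Setoid Q) (c : Quotient st) (a : A) :
    Option (Quotient st) :=
  (M.delta (Quotient.out c) a).map (Quotient.mk st)

/-- String extension of the quotient transition function. -/
noncomputable def qdhat (M : WDFA Q A) (st : Setoid Q) : Quotient st → List A → Option (Quotient st)
  | c, [] => some c
  | c, a :: w => (M.qdelta st c a).bind (fun d => M.qdhat st d w)

/-- The quotient automaton accepts `w`. -/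
def qAcc (M : WDFA Q A) (st : Setoid Q) (w : List A) : Prop :=
  ∃ c, M.qdhat st (Quotient.mk st M.start) w = some c ∧
    ∃ u ∈ M.F, Quotient.mk st u = c

/-- Order induced on `≡`-classes by the Wheeler order (classes are
intervals, so comparing arbitrary representatives is well defined). -/
def qle (st : Setoid Q) (c d : Quotient st) : Prop :=
  c = d ∨ ∀ u v : Q, Quotient.mk st u = c → Quotient.mk st v = d → u < v

end WDFA

/-!
The classes of `≡` are intervals of the Wheeler order: if `u ≡ v` then every state between them
has the same incoming label and is Myhill–Nerode equivalent to both. For any equivalence with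
interval classes, comparing representatives gives a linear order on the classes for which
`u ↦ [u]` is monotone, and distinct classes are strictly separated. The Wheeler axioms of the
quotient then follow from those of `A` applied to representatives; for axiom (ii) the two targets
carry different incoming labels, so they lie in different classes.
-/

namespace WDFA

section IntervalClasses

variable {Q : Type} [LinearOrder Q] {st : Setoid Q}

lemma lt_of_lt_of_mk_ne (hconv : ∀ c : Quotient st, (Quotient.mk st ⁻¹' {c}).OrdConnected)
    {u v x y : Q} (huv : u < v) (hne : Quotient.mk st u ≠ Quotient.mk st v)
    (hx : Quotient.mk st x = Quotient.mk st u) (hy : Quotient.mk st y = Quotient.mk st v) :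
    x < y := by
  by_contra! hyx
  rcases le_or_gt y u with hyu | huy
  · exact hne ((hconv _).out hy rfl ⟨hyu, huv.le⟩)
  · exact hne (((hconv _).out rfl hx ⟨huy.le, hyx⟩).symm.trans hy)

lemma qle_mk_of_le (hconv : ∀ c : Quotient st, (Quotient.mk st ⁻¹' {c}).OrdConnected)
    {u v : Q} (huv : u ≤ v) : qle st (Quotient.mk st u) (Quotient.mk st v) := by
  by_cases heq : Quotient.mk st u = Quotient.mk st v
  · exact Or.inl heq
  · have hlt : u < v := huv.lt_of_ne (by rintro rfl; exact heq rfl)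
    exact Or.inr fun x y hx hy => lt_of_lt_of_mk_ne hconv hlt heq hx hy

lemma out_lt_out_of_qle_of_ne {c d : Quotient st} (hcd : qle st c d) (hne : c ≠ d) :
    c.out < d.out :=
  (hcd.resolve_left hne) _ _ c.out_eq d.out_eq

lemma isLinearOrder_qle (hconv : ∀ c : Quotient st, (Quotient.mk st ⁻¹' {c}).OrdConnected) :
    IsLinearOrder (Quotient st) (qle st) where
  refl _ := Or.inl rfl
  trans c d e hcd hde := by
    rcases eq_or_ne c d with rfl | hcd'
    · exact hde
    rcases eq_or_ne d e with rfl | hde'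
    · exact hcd
    exact Or.inr fun u v hu hv =>
      (hcd.resolve_left hcd' u _ hu d.out_eq).trans (hde.resolve_left hde' _ v d.out_eq hv)
  antisymm c d hcd hdc := by
    by_contra hne
    exact (out_lt_out_of_qle_of_ne hcd hne).not_gt (out_lt_out_of_qle_of_ne hdc (Ne.symm hne))
  total c d := by
    rw [← c.out_eq, ← d.out_eq]
    exact (le_total c.out d.out).imp (qle_mk_of_le hconv) (qle_mk_of_le hconv)

end IntervalClasses

variable {Q A : Type} [LinearOrder Q] [LinearOrder A] {M : WDFA Q A}

lemma MN.symm {u v : Q} (h : M.MN u v) : M.MN v u :=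
  fun w => ⟨(h w).1.symm, (h w).2.symm⟩

lemma MN.trans {u v w : Q} (huv : M.MN u v) (hvw : M.MN v w) : M.MN u w :=
  fun x => ⟨(huv x).1.trans (hvw x).1, (huv x).2.trans (hvw x).2⟩

lemma equ_of_equ_of_le_of_le {lam : Q → WithBot A} {u v w : Q} (huv : M.Equ lam u v)
    (huw : u ≤ w) (hwv : w ≤ v) : M.Equ lam w u := by
  obtain ⟨-, -, hbetween⟩ := huv
  have hw := hbetween w ((min_le_left u v).trans huw) (hwv.trans (le_max_right u v))
  refine ⟨hw.1, hw.2, fun x hx₁ hx₂ => ?_⟩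
  rw [min_eq_right huw] at hx₁
  rw [max_eq_left huw] at hx₂
  have hx := hbetween x ((min_le_left u v).trans hx₁) (hx₂.trans (hwv.trans (le_max_right u v)))
  exact ⟨hx.1.trans hw.1.symm, hx.2.trans hw.2.symm⟩

lemma ordConnected_equ_class {lam : Q → WithBot A} {st : Setoid Q}
    (hst : ∀ u v : Q, st.r u v ↔ M.Equ lam u v) (c : Quotient st) :
    (Quotient.mk st ⁻¹' {c}).OrdConnected := by
  refine ⟨fun u hu v hv w ⟨huw, hwv⟩ => ?_⟩
  have huv : st.r u v := Quotient.exact (hu.trans hv.symm)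
  have hwu : st.r w u := (hst w u).2 (equ_of_equ_of_le_of_le ((hst u v).1 huv) huw hwv)
  exact (Quotient.sound hwu).trans hu

lemma qdelta_eq_some {st : Setoid Q} {c c' : Quotient st} {a : A}
    (h : M.qdelta st c a = some c') :
    ∃ u', M.delta c.out a = some u' ∧ Quotient.mk st u' = c' :=
  Option.map_eq_some_iff.1 h

end WDFA

theorem wdfa_quotient_is_wheeler_general {Q A : Type} [LinearOrder Q] [LinearOrder A]
    (M : WDFA Q A) (lam : Q → WithBot A) (hlam : M.HasLam lam)
    (st : Setoid Q)
    (hst : ∀ u v : Q, st.r u v ↔ M.Equ lam u v) :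
    IsLinearOrder (Quotient st) (WDFA.qle st) ∧
    (∀ c : Quotient st, WDFA.qle st (Quotient.mk st M.start) c) ∧
    (∀ (c d c' d' : Quotient st) (a b : A),
      M.qdelta st c a = some c' → M.qdelta st d b = some d' → a < b →
        WDFA.qle st c' d' ∧ c' ≠ d') ∧
    (∀ (c d c' d' : Quotient st) (a : A),
      M.qdelta st c a = some c' → M.qdelta st d a = some d' →
        WDFA.qle st c d → c ≠ d → WDFA.qle st c' d') := by
  have hconv := WDFA.ordConnected_equ_class hst
  refine ⟨WDFA.isLinearOrder_qle hconv, fun c => ?_, fun c d c' d' a b hc hd hab => ?_,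
    fun c d c' d' a hc hd hcd hne => ?_⟩
  · rw [← c.out_eq]
    exact WDFA.qle_mk_of_le hconv (M.start_le _)
  · obtain ⟨u', hu', rfl⟩ := WDFA.qdelta_eq_some hc
    obtain ⟨v', hv', rfl⟩ := WDFA.qdelta_eq_some hd
    have hne : Quotient.mk st u' ≠ Quotient.mk st v' := by
      intro h
      have hlam_eq := ((hst u' v').1 (Quotient.exact h)).1
      rw [hlam.2 _ _ _ hu', hlam.2 _ _ _ hv'] at hlam_eq
      exact hab.ne (WithBot.coe_injective hlam_eq)
    exact ⟨WDFA.qle_mk_of_le hconv (M.w2 hu' hv' hab).le, hne⟩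
  · obtain ⟨u', hu', rfl⟩ := WDFA.qdelta_eq_some hc
    obtain ⟨v', hv', rfl⟩ := WDFA.qdelta_eq_some hd
    exact WDFA.qle_mk_of_le hconv (M.w3 hu' hv' (WDFA.out_lt_out_of_qle_of_ne hcd hne))

/-- the quotient `A/≡` is itself a Wheeler DFA: the order
induced on `≡`-classes by the Wheeler order is a linear order satisfying the
three Wheeler axioms. -/
theorem wdfa_quotient_is_wheeler {Q A : Type} [LinearOrder Q] [LinearOrder A]
    (M : WDFA Q A) (lam : Q → WithBot A) (hlam : M.HasLam lam)
    (hreach : M.Reach1) (st : Setoid Q)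
    (hst : ∀ u v : Q, st.r u v ↔ M.Equ lam u v) :
    IsLinearOrder (Quotient st) (WDFA.qle st) ∧
    (∀ c : Quotient st, WDFA.qle st (Quotient.mk st M.start) c) ∧
    (∀ (c d c' d' : Quotient st) (a b : A),
      M.qdelta st c a = some c' → M.qdelta st d b = some d' → a < b →
        WDFA.qle st c' d' ∧ c' ≠ d') ∧
    (∀ (c d c' d' : Quotient st) (a : A),
      M.qdelta st c a = some c' → M.qdelta st d a = some d' →
        WDFA.qle st c d → c ≠ d → WDFA.qle st c' d') :=
  wdfa_quotient_is_wheeler_general M lam hlam st hst
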